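/- For any oriented graph G = (V, E), the multiplication rank satisfies ν(G) ≤ min(|V|², |E|) · min(|V|, |E| + 1). -/

import Mathlib

/-- An oriented graph: finite nonempty sets of vertices and edges with
origin and tail maps. -/
structure OrientedGraph where
  V : Type
  E : Type
  [fintypeV : Fintype V]
  [fintypeE : Fintype E]
  [nonemptyV : Nonempty V]
  [nonemptyE : Nonempty E]
  o : E → V
  t : E → V

attribute [instance] OrientedGraph.fintypeV OrientedGraph.fintypeE
  OrientedGraph.nonemptyV OrientedGraph.nonemptyE

namespace OrientedGraph

variable (G : OrientedGraph)

/-- `G.IsPath p u v` : the edge sequence `p` is a path from `u` to `v`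
(consecutive edges are composable; paths of length 0 at any vertex are allowed). -/
def IsPath (p : List G.E) (u v : G.V) : Prop :=
  List.Chain' (fun e f => G.t e = G.o f) p ∧
  ((p = [] ∧ u = v) ∨
    ∃ h : p ≠ [], u = G.o (p.head h) ∧ v = G.t (p.getLast h))

/-- The label of an edge sequence: the product of the labels of its edges
(the empty sequence maps to `1`). -/
def labelProd {M : Type} [Monoid M] (l : G.E → M) (s : List G.E) : M :=
  (s.map l).prod

/-- The diagram `(G, l)` is commutative: any two paths with the same origin and
the same tail have equal labels. -/
def IsCommutative {M : Type} [Monoid M] (l : G.E → M) : Prop :=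
  ∀ (u v : G.V) (p₁ p₂ : List G.E),
    G.IsPath p₁ u v → G.IsPath p₂ u v → G.labelProd l p₁ = G.labelProd l p₂

/-- A complete system of relations for `G`: for every monoid `M` and every
labeling `l : E → M`, the diagram `(G, l)` is commutative iff all relations hold. -/
def IsComplete (R : Finset (List G.E × List G.E)) : Prop :=
  ∀ (M : Type) [Monoid M], ∀ l : G.E → M,
    G.IsCommutative l ↔ ∀ r ∈ R, G.labelProd l r.1 = G.labelProd l r.2

/-- A minimal complete system of relations: no proper subset is complete. -/
def IsMinimalComplete (R : Finset (List G.E × List G.E)) : Prop :=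
  G.IsComplete R ∧ ∀ R' : Finset (List G.E × List G.E), R' ⊂ R → ¬ G.IsComplete R'

/-- The commutativity rank `η(G)`: the minimal cardinality of a complete
system of relations for `G`. -/
noncomputable def eta : ℕ :=
  sInf {n : ℕ | ∃ R : Finset (List G.E × List G.E), G.IsComplete R ∧ R.card = n}

/-- `S'` is obtained from `S` by one multiplication. -/
def MulStep (S S' : Set (List G.E)) : Prop :=
  ∃ s ∈ S, ∃ s' ∈ S, S' = S ∪ {s ++ s'}

/-- `G.mCost S S'` : the minimal number of multiplications needed to obtain `S'`
from `S` (`⊤` if impossible). -/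
noncomputable def mCost (S S' : Set (List G.E)) : ℕ∞ :=
  sInf {k : ℕ∞ | ∃ n : ℕ, k = n ∧ ∃ f : ℕ → Set (List G.E),
    f 0 = S ∧ f n = S' ∧ ∀ i < n, G.MulStep (f i) (f (i + 1))}

/-- `S_R`: the set of all edge sequences appearing in the relations of `R`. -/
def relSet (R : Finset (List G.E × List G.E)) : Set (List G.E) :=
  {s | ∃ r ∈ R, s = r.1 ∨ s = r.2}

/-- `ℰ`: the empty sequence together with all one-edge sequences. -/
def baseSet : Set (List G.E) :=
  {s | s = [] ∨ ∃ e : G.E, s = [e]}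

/-- `m(R)`: the minimal number of multiplications needed to build all sequences
appearing in `R`, starting from `ℰ`. -/
noncomputable def mRel (R : Finset (List G.E × List G.E)) : ℕ∞ :=
  sInf {k : ℕ∞ | ∃ S : Set (List G.E), G.relSet R ⊆ S ∧ k = G.mCost G.baseSet S}

/-- The multiplication rank `ν(G)`. -/
noncomputable def nu : ℕ∞ :=
  sInf {k : ℕ∞ | ∃ R : Finset (List G.E × List G.E), G.IsComplete R ∧ k = G.mRel R}

/-- A 4-tuple of edges `(a, b, c, d)` forms a rhomboid. -/
def IsRhomboid (r : G.E × G.E × G.E × G.E) : Prop :=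
  G.o r.1 = G.o r.2.2.1 ∧ G.t r.2.1 = G.t r.2.2.2 ∧
  G.t r.1 = G.o r.2.1 ∧ G.t r.2.2.1 = G.o r.2.2.2 ∧
  G.o r.1 ≠ G.t r.1 ∧ G.o r.1 ≠ G.o r.2.2.2 ∧ G.o r.1 ≠ G.t r.2.2.2 ∧
  G.t r.1 ≠ G.o r.2.2.2 ∧ G.t r.1 ≠ G.t r.2.2.2 ∧ G.o r.2.2.2 ≠ G.t r.2.2.2

/-- Two rhomboids `(a, b, c, d)` and `(a', b', c', d')` are disjoint. -/
def RhDisjoint (r r' : G.E × G.E × G.E × G.E) : Prop :=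
  (r.1 ≠ r'.1 ∨ r.2.1 ≠ r'.2.1) ∧
  (r.1 ≠ r'.2.2.1 ∨ r.2.1 ≠ r'.2.2.2) ∧
  (r.2.2.1 ≠ r'.2.2.1 ∨ r.2.2.2 ≠ r'.2.2.2) ∧
  (r.2.2.1 ≠ r'.1 ∨ r.2.2.2 ≠ r'.2.1)

/-- `𝔯𝔥(G)`: the maximal cardinality of a family of pairwise disjoint rhomboids in `G`. -/
noncomputable def rhNum : ℕ :=
  sSup {n : ℕ | ∃ F : Finset (G.E × G.E × G.E × G.E),
    (∀ r ∈ F, G.IsRhomboid r) ∧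
    (∀ r ∈ F, ∀ r' ∈ F, r ≠ r' → G.RhDisjoint r r') ∧ F.card = n}

/-- `𝔏(G)`: the number of loops of `G`. -/
noncomputable def loopCount : ℕ :=
  Nat.card {e : G.E // G.o e = G.t e}

/-- `G` is quasi-acyclic: no directed cycle visiting two or more distinct vertices. -/
def QuasiAcyclic : Prop :=
  ∀ u v : G.V, u ≠ v →
    ∀ p q : List G.E, G.IsPath p u v → G.IsPath q v u → False

/-- `G` is 2-path-bounded: every oriented path avoiding loop edges has length at most 2. -/
def TwoPathBounded : Prop :=
  ∀ (p : List G.E) (u v : G.V), G.IsPath p u v →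
    (∀ e ∈ p, G.o e ≠ G.t e) → p.length ≤ 2

/-- `G` has a pair of multiple edges. -/
def HasMultipleEdges : Prop :=
  ∃ e e' : G.E, e ≠ e' ∧ G.t e = G.t e' ∧ G.o e = G.o e' ∧ G.t e ≠ G.o e

/-- `G` has a triangle. -/
def HasTriangle : Prop :=
  ∃ a b c : G.E, G.o a = G.o b ∧ G.t b = G.o c ∧ G.t c = G.t a ∧
    G.o a ≠ G.t a ∧ G.o b ≠ G.t b ∧ G.o c ≠ G.t c

/-- `G` has no loops. -/
def NoLoops : Prop := ∀ e : G.E, G.o e ≠ G.t e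

/-- Every edge occurring on either side of the relation `r` is a loop. -/
def AllLoops (r : List G.E × List G.E) : Prop :=
  (∀ e ∈ r.1, G.o e = G.t e) ∧ (∀ e ∈ r.2, G.o e = G.t e)

/-- Both sides of the relation `r` contain at least one non-loop edge. -/
def BothSidesNonLoop (r : List G.E × List G.E) : Prop :=
  (∃ e ∈ r.1, G.o e ≠ G.t e) ∧ (∃ e ∈ r.2, G.o e ≠ G.t e)

end OrientedGraph

/-- The triploid `T(n₁, n₂, n₃, n₀, e)`. -/
def Triploid (n₁ n₂ n₃ n₀ e : ℕ) (hn₁ : 0 < n₁) (he : n₂ * (n₁ + n₃) ≤ e)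
    (he₀ : 0 < e) : OrientedGraph where
  V := Fin n₀ ⊕ Fin n₁ ⊕ Fin n₂ ⊕ Fin n₃
  E := (Fin n₁ × Fin n₂) ⊕ (Fin n₂ × Fin n₃) ⊕ Fin (e - n₂ * (n₁ + n₃))
  nonemptyV := ⟨Sum.inr (Sum.inl ⟨0, hn₁⟩)⟩
  nonemptyE := by
    by_cases h : n₂ * (n₁ + n₃) < e
    · exact ⟨Sum.inr (Sum.inr ⟨0, by omega⟩)⟩
    · have h2 : 0 < n₂ := by
        rcases Nat.eq_zero_or_pos n₂ with h0 | h0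
        · exfalso; subst h0; simp at h; omega
        · exact h0
      exact ⟨Sum.inl (⟨0, hn₁⟩, ⟨0, h2⟩)⟩
  o := Sum.elim (fun p => Sum.inr (Sum.inl p.1))
        (Sum.elim (fun p => Sum.inr (Sum.inr (Sum.inl p.1)))
          (fun _ => Sum.inr (Sum.inl ⟨0, hn₁⟩)))
  t := Sum.elim (fun p => Sum.inr (Sum.inr (Sum.inl p.2)))
        (Sum.elim (fun p => Sum.inr (Sum.inr (Sum.inr p.2)))
          (fun _ => Sum.inr (Sum.inl ⟨0, hn₁⟩)))

/-! For every pair of adjacent vertices choose one edge between them, and for every pair `(u, v)`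
with `v` reachable from `u` a shortest path `canonPath u v` made of chosen edges, in such a way
that the tail of a canonical path is again canonical. The relations `[e] = [e']`, with `e'` the
chosen edge parallel to `e`, and `e · canonPath (t e) v = canonPath (o e) v`, for chosen `e`,
form a complete system: under them every path has the label of the canonical path with the same
ends. Apart from single edges, every sequence occurring in them has the form
`e · canonPath (t e) v`, which is one multiplication away from a shorter sequence of the same form.
There are at most `min(|V|², |E|)` chosen edges `e`, and for each of them at most
`min(|V|, |E| + 1)` targets `v`, since `v` is determined by the last edge of `canonPath (t e) v`. -/

namespace OrientedGraph

open scoped Classical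

variable (G : OrientedGraph)

def Adj (u w : G.V) : Prop := ∃ e, G.o e = u ∧ G.t e = w

def Reach (u v : G.V) : Prop := ∃ p, G.IsPath p u v

/-- `0` when `v` is not reachable from `u`. -/
noncomputable def dist (u v : G.V) : ℕ :=
  sInf {k | ∃ p, G.IsPath p u v ∧ p.length = k}

/-- A junk edge when `u` and `w` are not adjacent. -/
noncomputable def repEdge (u w : G.V) : G.E :=
  if h : G.Adj u w then h.choose else Classical.arbitrary G.E

def IsRep (e : G.E) : Prop := G.repEdge (G.o e) (G.t e) = e

noncomputable def nextHop (u v : G.V) : G.V :=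
  if h : ∃ w, G.Adj u w ∧ G.Reach w v ∧ G.dist w v < G.dist u v then h.choose else v

variable {G}

lemma isPath_iff {p : List G.E} {u v : G.V} :
    G.IsPath p u v ↔ p.IsChain (fun e f => G.t e = G.o f) ∧
      ((p = [] ∧ u = v) ∨ ∃ h : p ≠ [], u = G.o (p.head h) ∧ v = G.t (p.getLast h)) :=
  Iff.rfl

lemma isPath_nil_iff {u v : G.V} : G.IsPath [] u v ↔ u = v := by
  simp [isPath_iff]

lemma isPath_cons_iff {e : G.E} {q : List G.E} {u v : G.V} :
    G.IsPath (e :: q) u v ↔ G.o e = u ∧ G.IsPath q (G.t e) v := by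
  cases q with
  | nil => simp [isPath_iff, eq_comm]
  | cons f r => simp [isPath_iff, List.isChain_cons_cons, eq_comm, and_assoc, and_left_comm]

lemma isPath_singleton (e : G.E) : G.IsPath [e] (G.o e) (G.t e) := by
  simp [isPath_cons_iff, isPath_nil_iff]

lemma IsPath.reach {p : List G.E} {u v : G.V} (hp : G.IsPath p u v) : G.Reach u v := ⟨p, hp⟩

lemma IsPath.t_getLast {p : List G.E} {u v : G.V} (hp : G.IsPath p u v) (h : p ≠ []) :
    G.t (p.getLast h) = v := by
  obtain ⟨-, h' | ⟨_, _, hv⟩⟩ := hp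
  · exact absurd h'.1 h
  · exact hv.symm

lemma IsPath.eq_of_getLast?_eq {p q : List G.E} {u v v' : G.V} (hp : G.IsPath p u v)
    (hq : G.IsPath q u v') (h : p.getLast? = q.getLast?) : v = v' := by
  by_cases hp0 : p = []
  · have hq0 : q = [] := List.getLast?_eq_none_iff.mp (by rw [← h, hp0, List.getLast?_nil])
    subst hp0 hq0
    exact (isPath_nil_iff.mp hp).symm.trans (isPath_nil_iff.mp hq)
  · have hq0 : q ≠ [] := fun hq0 =>
      hp0 (List.getLast?_eq_none_iff.mp (by rw [h, hq0, List.getLast?_nil]))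
    rw [List.getLast?_eq_some_getLast hp0, List.getLast?_eq_some_getLast hq0,
      Option.some_inj] at h
    rw [← hp.t_getLast hp0, ← hq.t_getLast hq0, h]

lemma Reach.exists_isPath_length_eq_dist {u v : G.V} (h : G.Reach u v) :
    ∃ p, G.IsPath p u v ∧ p.length = G.dist u v := by
  obtain ⟨p, hp⟩ := h
  exact Nat.sInf_mem (s := {k | ∃ p, G.IsPath p u v ∧ p.length = k}) ⟨p.length, p, hp, rfl⟩

lemma IsPath.dist_le_length {p : List G.E} {u v : G.V} (hp : G.IsPath p u v) :
    G.dist u v ≤ p.length :=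
  Nat.sInf_le ⟨p, hp, rfl⟩

lemma adj_o_t (e : G.E) : G.Adj (G.o e) (G.t e) := ⟨e, rfl, rfl⟩

lemma Adj.repEdge_spec {u w : G.V} (h : G.Adj u w) :
    G.o (G.repEdge u w) = u ∧ G.t (G.repEdge u w) = w := by
  rw [repEdge, dif_pos h]
  exact h.choose_spec

lemma Adj.isRep_repEdge {u w : G.V} (h : G.Adj u w) : G.IsRep (G.repEdge u w) := by
  rw [IsRep, h.repEdge_spec.1, h.repEdge_spec.2]

lemma nextHop_spec {u v : G.V} (hne : u ≠ v) (h : G.Reach u v) :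
    G.Adj u (G.nextHop u v) ∧ G.Reach (G.nextHop u v) v ∧
      G.dist (G.nextHop u v) v < G.dist u v := by
  have hex : ∃ w, G.Adj u w ∧ G.Reach w v ∧ G.dist w v < G.dist u v := by
    obtain ⟨p, hp, hlen⟩ := h.exists_isPath_length_eq_dist
    cases p with
    | nil => exact absurd (isPath_nil_iff.mp hp) hne
    | cons e q =>
      obtain ⟨he, hq⟩ := isPath_cons_iff.mp hp
      refine ⟨G.t e, ⟨e, he, rfl⟩, hq.reach, ?_⟩
      have := hq.dist_le_length
      simp only [List.length_cons] at hlen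
      omega
  rw [nextHop, dif_pos hex]
  exact hex.choose_spec

variable (G) in
/-- Empty when `v` is not reachable from `u`. -/
noncomputable def canonPath (u v : G.V) : List G.E :=
  if h : u ≠ v ∧ G.Reach u v then
    have := (nextHop_spec h.1 h.2).2.2
    G.repEdge u (G.nextHop u v) :: canonPath (G.nextHop u v) v
  else []
termination_by G.dist u v

lemma canonPath_self (u : G.V) : G.canonPath u u = [] := by
  rw [canonPath, dif_neg (by simp)]

lemma canonPath_of_ne {u v : G.V} (hne : u ≠ v) (h : G.Reach u v) :
    G.canonPath u v = G.repEdge u (G.nextHop u v) :: G.canonPath (G.nextHop u v) v := by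
  rw [canonPath, dif_pos ⟨hne, h⟩]

lemma Reach.isPath_canonPath {u v : G.V} (h : G.Reach u v) :
    G.IsPath (G.canonPath u v) u v := by
  induction hd : G.dist u v using Nat.strong_induction_on generalizing u with
  | _ n ih =>
    by_cases hne : u = v
    · subst hne
      rw [canonPath_self, isPath_nil_iff]
    · obtain ⟨hadj, hreach, hlt⟩ := nextHop_spec hne h
      rw [canonPath_of_ne hne h, isPath_cons_iff, hadj.repEdge_spec.1, hadj.repEdge_spec.2]
      exact ⟨rfl, ih _ (hd ▸ hlt) hreach rfl⟩

variable (G)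

noncomputable def edgeRelations : Finset (List G.E × List G.E) :=
  Finset.univ.image fun e => ([e], [G.repEdge (G.o e) (G.t e)])

noncomputable def repPairs : Finset (G.E × G.V) :=
  Finset.univ.filter fun p => G.IsRep p.1 ∧ G.Reach (G.t p.1) p.2

noncomputable def pathRelations : Finset (List G.E × List G.E) :=
  G.repPairs.image fun p => (p.1 :: G.canonPath (G.t p.1) p.2, G.canonPath (G.o p.1) p.2)

noncomputable def canonSystem : Finset (List G.E × List G.E) :=
  G.edgeRelations ∪ G.pathRelations

variable {G}

lemma mem_repPairs {e : G.E} {v : G.V} :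
    (e, v) ∈ G.repPairs ↔ G.IsRep e ∧ G.Reach (G.t e) v := by
  simp [repPairs]

lemma IsPath.cons_canonPath {e : G.E} {v : G.V} (h : G.Reach (G.t e) v) :
    G.IsPath (e :: G.canonPath (G.t e) v) (G.o e) v :=
  isPath_cons_iff.mpr ⟨rfl, h.isPath_canonPath⟩

lemma labelProd_cons {M : Type} [Monoid M] (l : G.E → M) (e : G.E) (s : List G.E) :
    G.labelProd l (e :: s) = l e * G.labelProd l s := by
  simp [labelProd]

/-- Induction on the path: replace its first edge by the chosen parallel one, then apply the
relation of `pathRelations` for that edge. -/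
lemma labelProd_eq_canonPath {M : Type} [Monoid M] {l : G.E → M}
    (hrel : ∀ r ∈ G.canonSystem, G.labelProd l r.1 = G.labelProd l r.2) {p : List G.E}
    {u v : G.V} (hp : G.IsPath p u v) : G.labelProd l p = G.labelProd l (G.canonPath u v) := by
  induction p generalizing u with
  | nil => rw [isPath_nil_iff.mp hp, canonPath_self]
  | cons e q ih =>
    obtain ⟨rfl, hq⟩ := isPath_cons_iff.mp hp
    set f := G.repEdge (G.o e) (G.t e)
    obtain ⟨hfo, hft⟩ : G.o f = G.o e ∧ G.t f = G.t e := (adj_o_t e).repEdge_spec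
    have hef : l e = l f := by
      simpa [labelProd] using
        hrel _ (Finset.mem_union_left _ (Finset.mem_image.mpr ⟨e, Finset.mem_univ e, rfl⟩))
    have hf : (f, v) ∈ G.repPairs := mem_repPairs.mpr ⟨(adj_o_t e).isRep_repEdge, hft ▸ hq.reach⟩
    have hfv := hrel _ (Finset.mem_union_right _ (Finset.mem_image.mpr ⟨_, hf, rfl⟩))
    simp only [labelProd_cons, hfo, hft] at hfv
    rw [labelProd_cons, ih hq, hef, hfv]

variable (G) in
lemma isComplete_canonSystem : G.IsComplete G.canonSystem := by
  intro M _ l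
  refine ⟨fun hcomm r hr => ?_, fun hrel u v p₁ p₂ hp₁ hp₂ =>
    (labelProd_eq_canonPath hrel hp₁).trans (labelProd_eq_canonPath hrel hp₂).symm⟩
  rcases Finset.mem_union.mp hr with hr | hr
  · obtain ⟨e, -, rfl⟩ := Finset.mem_image.mp hr
    obtain ⟨hfo, hft⟩ := (adj_o_t e).repEdge_spec
    refine hcomm _ _ _ _ (isPath_singleton e) ?_
    simpa only [hfo, hft] using isPath_singleton (G.repEdge (G.o e) (G.t e))
  · obtain ⟨⟨e, v⟩, hev, rfl⟩ := Finset.mem_image.mp hr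
    have hpath := IsPath.cons_canonPath (mem_repPairs.mp hev).2
    exact hcomm _ _ _ _ hpath hpath.reach.isPath_canonPath

variable (G) in
def MulChain (n : ℕ) (S S' : Set (List G.E)) : Prop :=
  ∃ f : ℕ → Set (List G.E), f 0 = S ∧ f n = S' ∧ ∀ i < n, G.MulStep (f i) (f (i + 1))

lemma mCost_le_of_mulChain {n : ℕ} {S S' : Set (List G.E)} (h : G.MulChain n S S') :
    G.mCost S S' ≤ n :=
  sInf_le ⟨n, rfl, h⟩

lemma mulChain_zero (S : Set (List G.E)) : G.MulChain 0 S S :=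
  ⟨fun _ => S, rfl, rfl, fun _ h => absurd h (Nat.not_lt_zero _)⟩

lemma MulChain.snoc {n : ℕ} {S S' S'' : Set (List G.E)} (h : G.MulChain n S S')
    (hstep : G.MulStep S' S'') : G.MulChain (n + 1) S S'' := by
  obtain ⟨f, h0, hn, hf⟩ := h
  refine ⟨fun i => if i ≤ n then f i else S'', by simp [h0], by simp, fun i hi => ?_⟩
  rcases Nat.lt_or_eq_of_le (Nat.lt_succ_iff.mp hi) with hi | rfl
  · simpa [hi.le, Nat.succ_le_of_lt hi] using hf i hi
  · simpa [hn] using hstep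

/-- The new sequences are added in order of increasing length, one multiplication each. -/
lemma mulChain_union (S : Set (List G.E)) (T : Finset (List G.E))
    (hT : ∀ x ∈ T, ∃ a b, x = a ++ b ∧ (a ∈ S ∨ a ∈ T ∧ a.length < x.length) ∧
      (b ∈ S ∨ b ∈ T ∧ b.length < x.length)) :
    G.MulChain T.card S (S ∪ T) := by
  induction T using
    @Finset.induction_on_max_value _ _ _ (inferInstance : DecidableEq (List G.E)) List.length with
  | empty => simpa using mulChain_zero S
  | insert x T hx hmax ih =>
    have hpiece : ∀ y ∈ insert x T, ∀ a, (a ∈ S ∨ a ∈ insert x T ∧ a.length < y.length) →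
        a ∈ S ∨ a ∈ T ∧ a.length < y.length := by
      rintro y hy a (ha | ⟨ha, hlt⟩)
      · exact Or.inl ha
      · refine Or.inr ⟨(Finset.mem_insert.mp ha).resolve_left ?_, hlt⟩
        rintro rfl
        rcases Finset.mem_insert.mp hy with rfl | hyT
        · exact lt_irrefl _ hlt
        · exact absurd (hmax y hyT) (not_le.mpr hlt)
    have hchain : G.MulChain T.card S (S ∪ T) := ih fun y hy => by
      have hy' : y ∈ insert x T := Finset.mem_insert_of_mem hy
      obtain ⟨a, b, hyab, ha, hb⟩ := hT y hy'
      exact ⟨a, b, hyab, hpiece y hy' a ha, hpiece y hy' b hb⟩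
    obtain ⟨a, b, hxab, ha, hb⟩ := hT x (Finset.mem_insert_self x T)
    have hmem : ∀ c, (c ∈ S ∨ c ∈ T ∧ c.length < x.length) → c ∈ S ∪ (T : Set (List G.E)) :=
      fun c hc => hc.imp_right And.left
    rw [Finset.card_insert_of_notMem hx]
    refine hchain.snoc ⟨a, hmem a (hpiece x (Finset.mem_insert_self x T) a ha),
      b, hmem b (hpiece x (Finset.mem_insert_self x T) b hb), ?_⟩
    ext y
    simp only [Finset.coe_insert, ← hxab, Set.mem_union, Set.mem_insert_iff,
      Set.mem_singleton_iff, Finset.mem_coe]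
    tauto

lemma mCost_union_le (S : Set (List G.E)) (T : Finset (List G.E))
    (hT : ∀ x ∈ T, ∃ a b, x = a ++ b ∧ (a ∈ S ∨ a ∈ T ∧ a.length < x.length) ∧
      (b ∈ S ∨ b ∈ T ∧ b.length < x.length)) :
    G.mCost S (S ∪ T) ≤ T.card :=
  mCost_le_of_mulChain (mulChain_union S T hT)

variable (G)

noncomputable def pathSeqs : Finset (List G.E) :=
  G.repPairs.image fun p => p.1 :: G.canonPath (G.t p.1) p.2

noncomputable def reps : Finset G.E := Finset.univ.filter G.IsRep

variable {G}

lemma cons_canonPath_mem_pathSeqs {e : G.E} {v : G.V} (hev : (e, v) ∈ G.repPairs) :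
    e :: G.canonPath (G.t e) v ∈ G.pathSeqs :=
  Finset.mem_image.mpr ⟨(e, v), hev, rfl⟩

lemma Reach.canonPath_mem {u v : G.V} (h : G.Reach u v) :
    G.canonPath u v ∈ G.baseSet ∪ G.pathSeqs := by
  by_cases hne : u = v
  · subst hne
    exact Or.inl (Or.inl (canonPath_self u))
  · obtain ⟨hadj, hreach, -⟩ := nextHop_spec hne h
    have hmem := cons_canonPath_mem_pathSeqs
      (mem_repPairs.mpr ⟨hadj.isRep_repEdge, hadj.repEdge_spec.2 ▸ hreach⟩)
    rw [hadj.repEdge_spec.2] at hmem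
    exact Or.inr (canonPath_of_ne hne h ▸ hmem)

variable (G)

lemma relSet_canonSystem_subset : G.relSet G.canonSystem ⊆ G.baseSet ∪ G.pathSeqs := by
  rintro s ⟨r, hr, hs⟩
  rcases Finset.mem_union.mp hr with hr | hr
  · obtain ⟨e, -, rfl⟩ := Finset.mem_image.mp hr
    exact Or.inl (hs.elim (fun hs => Or.inr ⟨e, hs⟩) fun hs => Or.inr ⟨_, hs⟩)
  · obtain ⟨⟨e, v⟩, hev, rfl⟩ := Finset.mem_image.mp hr
    rcases hs with rfl | rfl
    · exact Or.inr (cons_canonPath_mem_pathSeqs hev)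
    · exact (IsPath.cons_canonPath (mem_repPairs.mp hev).2).reach.canonPath_mem

/-- Each `e :: canonPath (t e) v` is `[e]` times a shorter sequence of the same kind (or a base
sequence), so it costs one multiplication. -/
lemma mCost_pathSeqs_le : G.mCost G.baseSet (G.baseSet ∪ G.pathSeqs) ≤ G.pathSeqs.card := by
  refine mCost_union_le _ _ fun x hx => ?_
  obtain ⟨⟨e, v⟩, hev, rfl⟩ := Finset.mem_image.mp hx
  refine ⟨[e], G.canonPath (G.t e) v, rfl, Or.inl (Or.inr ⟨e, rfl⟩), ?_⟩
  rcases (mem_repPairs.mp hev).2.canonPath_mem with h | h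
  · exact Or.inl h
  · exact Or.inr ⟨h, by simp⟩

lemma card_reps_le : G.reps.card ≤ min (Fintype.card G.V ^ 2) (Fintype.card G.E) := by
  refine le_min ?_ (Finset.card_filter_le _ _)
  have hinj : Set.InjOn (fun e => (G.o e, G.t e)) G.reps := by
    intro e he e' he' hee
    simp only [Prod.mk.injEq] at hee
    have hrep : G.IsRep e := (Finset.mem_filter.mp he).2
    have hrep' : G.IsRep e' := (Finset.mem_filter.mp he').2
    rw [← hrep, ← hrep', hee.1, hee.2]
  simpa [sq] using Finset.card_le_card_of_injOn _ (fun e _ => Finset.mem_univ _) hinj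

/-- For a fixed edge `e`, the target `v` is recovered from the last edge of
`canonPath (t e) v`, or is `t e` if that path is empty. -/
lemma card_repPairs_le :
    G.repPairs.card ≤ min (Fintype.card G.V) (Fintype.card G.E + 1) * G.reps.card := by
  refine Finset.card_le_mul_card_image_of_maps_to (f := Prod.fst)
    (fun p hp => Finset.mem_filter.mpr ⟨Finset.mem_univ _, (Finset.mem_filter.mp hp).2.1⟩)
    _ fun e _ => le_min ?_ ?_
  · refine (Finset.card_le_card_of_injOn Prod.snd (fun _ _ => Finset.mem_univ _) ?_).trans
      (Finset.card_univ (α := G.V)).le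
    intro p hp q hq hpq
    exact Prod.ext ((Finset.mem_filter.mp hp).2.trans (Finset.mem_filter.mp hq).2.symm) hpq
  · refine (Finset.card_le_card_of_injOn (fun p => (G.canonPath (G.t p.1) p.2).getLast?)
      (fun _ _ => Finset.mem_univ _) ?_).trans (by simp)
    rintro ⟨e, v⟩ hp ⟨e', v'⟩ hq hpq
    obtain ⟨hev, rfl⟩ := Finset.mem_filter.mp hp
    obtain ⟨hev', rfl⟩ := Finset.mem_filter.mp hq
    have hv := (mem_repPairs.mp hev).2.isPath_canonPath
    have hv' := (mem_repPairs.mp hev').2.isPath_canonPath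
    exact Prod.ext rfl (hv.eq_of_getLast?_eq hv' hpq)

lemma card_pathSeqs_le : G.pathSeqs.card ≤
    min (Fintype.card G.V ^ 2) (Fintype.card G.E) *
      min (Fintype.card G.V) (Fintype.card G.E + 1) := by
  rw [mul_comm]
  exact (Finset.card_image_le.trans G.card_repPairs_le).trans
    (Nat.mul_le_mul_left _ G.card_reps_le)

end OrientedGraph

/-- Theorem (upper bound on multiplication rank):
`ν(G) ≤ min(|V|², |E|) · min(|V|, |E| + 1)`. -/
theorem nu_upper_bound (G : OrientedGraph) :
    G.nu ≤ ((min (Fintype.card G.V ^ 2) (Fintype.card G.E) *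
      min (Fintype.card G.V) (Fintype.card G.E + 1) : ℕ) : ℕ∞) := by
  calc G.nu ≤ G.mRel G.canonSystem := sInf_le ⟨_, G.isComplete_canonSystem, rfl⟩
    _ ≤ G.mCost G.baseSet (G.baseSet ∪ G.pathSeqs) :=
      sInf_le ⟨_, G.relSet_canonSystem_subset, rfl⟩
    _ ≤ G.pathSeqs.card := G.mCost_pathSeqs_le
    _ ≤ _ := Nat.cast_le.mpr G.card_pathSeqs_le
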